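/- For every real ν ≥ 0 and every integer s ≥ 1, the positive zeros of the derivatives J′_ν and J′_{ν+1} interlace: j′_{ν,s} < j′_{ν+1,s} < j′_{ν,s+1}. -/

import Mathlib

open Real Filter

/-- Bessel function of the first kind of real order `ν`:
`J_ν(x) = Σ_{k=0}^∞ ((−1)^k / (k! · Γ(ν+k+1))) · (x/2)^{ν+2k}`. -/
noncomputable def besselJ (ν : ℝ) (x : ℝ) : ℝ :=
  ∑' k : ℕ, ((-1 : ℝ) ^ k / ((k.factorial : ℝ) * Real.Gamma (ν + k + 1))) *
    (x / 2) ^ (ν + 2 * (k : ℝ))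

/-- Bessel function of the second kind of real order `ν`, defined as the limit
`Y_ν(x) = lim_{μ→ν, μ ∉ ℤ} (J_μ(x)·cos(μπ) − J_{−μ}(x)) / sin(μπ)`. -/
noncomputable def besselY (ν : ℝ) (x : ℝ) : ℝ :=
  limUnder (nhdsWithin ν {μ : ℝ | ∀ n : ℤ, μ ≠ (n : ℝ)})
    fun μ => (besselJ μ x * Real.cos (μ * π) - besselJ (-μ) x) / Real.sin (μ * π)

/-- `z s`, for integers `s ≥ 1`, enumerates all the positive real zeros of `f`
in strictly increasing order. -/
structure IsPosZeroSeq (f : ℝ → ℝ) (z : ℕ → ℝ) : Prop where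
  pos : ∀ s, 1 ≤ s → 0 < z s
  mono : ∀ s t, 1 ≤ s → s < t → z s < z t
  isZero : ∀ s, 1 ≤ s → f (z s) = 0
  complete : ∀ x, 0 < x → f x = 0 → ∃ s, 1 ≤ s ∧ z s = x

/-- `z s`, for integers `s ≥ 1`, enumerates the zeros `j'_{ν,s}` of `J'_ν`
(increasingly), with the convention that `x = 0` is counted as the first zero
`j'_{0,1}` of `J'_0`. -/
def IsBesselJDerivZeroSeq (ν : ℝ) (z : ℕ → ℝ) : Prop :=
  (ν = 0 → z 1 = 0 ∧ IsPosZeroSeq (deriv (besselJ 0)) fun s => z (s + 1)) ∧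
  (ν ≠ 0 → IsPosZeroSeq (deriv (besselJ ν)) z)

open Set Topology

noncomputable def bc (ν : ℝ) (k : ℕ) : ℝ := (-1)^k / ((k.factorial : ℝ) * Real.Gamma (ν + k + 1))

noncomputable def bP (ν : ℝ) (t : ℝ) : ℝ := ∑' k : ℕ, bc ν k * t ^ k

lemma gamma_arg_pos {ν : ℝ} (hν : 0 ≤ ν) (k : ℕ) : 0 < ν + k + 1 := by positivity

lemma bGamma_pos {ν : ℝ} (hν : 0 ≤ ν) (k : ℕ) : 0 < Real.Gamma (ν + k + 1) :=
  Real.Gamma_pos_of_pos (gamma_arg_pos hν k)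

lemma bGamma_succ {ν : ℝ} (hν : 0 ≤ ν) (k : ℕ) :
    Real.Gamma (ν + k + 2) = (ν + k + 1) * Real.Gamma (ν + k + 1) := by
  have h := Real.Gamma_add_one (s := ν + k + 1) (by positivity : (0:ℝ) < ν + k + 1).ne'
  calc Real.Gamma (ν + k + 2) = Real.Gamma ((ν + k + 1) + 1) := by ring_nf
    _ = (ν + k + 1) * Real.Gamma (ν + k + 1) := h

lemma bc_ne_zero {ν : ℝ} (hν : 0 ≤ ν) (k : ℕ) : bc ν k ≠ 0 := by
  unfold bc
  have h1 : (k.factorial : ℝ) > 0 := by positivity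
  have h2 := bGamma_pos hν k
  have : ((-1:ℝ))^k ≠ 0 := by
    rcases Nat.even_or_odd k with h | h
    · rw [h.neg_one_pow]; norm_num
    · rw [h.neg_one_pow]; norm_num
  positivity

lemma abs_bc {ν : ℝ} (hν : 0 ≤ ν) (k : ℕ) :
    |bc ν k| = 1 / ((k.factorial : ℝ) * Real.Gamma (ν + k + 1)) := by
  unfold bc
  rw [abs_div, abs_pow, abs_neg, abs_one, one_pow]
  congr 1
  exact abs_of_pos (by have := bGamma_pos hν k; positivity)

lemma bc_succ {ν : ℝ} (hν : 0 ≤ ν) (k : ℕ) :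
    bc ν (k+1) = -bc ν k / ((k+1) * (ν + k + 1)) := by
  unfold bc
  have h2 : Real.Gamma (ν + (k+1:ℕ) + 1) = (ν + k + 1) * Real.Gamma (ν + k + 1) := by
    have := bGamma_succ hν k
    push_cast
    rw [show ν + ((k:ℝ)+1) + 1 = ν + k + 2 by ring, this]
  rw [h2]
  have h3 : (((k+1 : ℕ)).factorial : ℝ) = (k+1) * k.factorial := by
    rw [Nat.factorial_succ]; push_cast; ring
  rw [h3, pow_succ]
  have hf : (k.factorial : ℝ) ≠ 0 := by positivity
  have hg : Real.Gamma (ν + k + 1) ≠ 0 := (bGamma_pos hν k).ne'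
  have hk1 : ((k:ℝ)+1) ≠ 0 := by positivity
  have hnk1 : (ν + k + 1) ≠ 0 := (gamma_arg_pos hν k).ne'
  field_simp

lemma summable_bP {ν : ℝ} (hν : 0 ≤ ν) (t : ℝ) : Summable (fun k => bc ν k * t ^ k) := by
  apply summable_of_ratio_norm_eventually_le (r := 1/2) (by norm_num)
  filter_upwards [eventually_ge_atTop (Nat.ceil (2 * |t|))] with k hk
  have hk' : 2 * |t| ≤ k := le_trans (Nat.le_ceil _) (by exact_mod_cast hk)
  have h1 : ‖bc ν (k+1) * t^(k+1)‖ = |bc ν k| * |t|^(k+1) / ((k+1) * (ν + k + 1)) := by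
    rw [bc_succ hν k]
    rw [norm_mul, norm_div, norm_neg]
    simp only [Real.norm_eq_abs, abs_pow]
    rw [abs_of_pos (show (0:ℝ) < (k+1)*(ν+k+1) by positivity)]
    ring
  rw [h1]
  have h2 : ‖bc ν k * t^k‖ = |bc ν k| * |t|^k := by
    rw [norm_mul]; simp [Real.norm_eq_abs, abs_pow]
  rw [h2]
  have hg1 : (1:ℝ) ≤ ν + k + 1 := by
    have : (0:ℝ) ≤ (k:ℝ) := Nat.cast_nonneg k
    nlinarith
  have hA : (0:ℝ) ≤ |bc ν k| * |t|^k := by positivity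
  rw [pow_succ, div_le_iff₀ (by positivity)]
  have ht2 : |t| ≤ (k+1)/2 := by nlinarith
  calc |bc ν k| * (|t| ^ k * |t|) = (|bc ν k| * |t|^k) * |t| := by ring
    _ ≤ (|bc ν k| * |t|^k) * ((k+1)/2) := by
        apply mul_le_mul_of_nonneg_left ht2 hA
    _ ≤ 1/2 * (|bc ν k| * |t| ^ k) * ((k + 1) * (ν + k + 1)) := by
        nlinarith [mul_nonneg hA (by positivity : (0:ℝ) ≤ (k:ℝ)+1)]

lemma bc_shift {ν : ℝ} (hν : 0 ≤ ν) (k : ℕ) : bc (ν+1) k = bc ν k / (ν + k + 1) := by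
  unfold bc
  rw [show ν + 1 + (k:ℝ) + 1 = ν + k + 2 by ring, bGamma_succ hν k]
  field_simp

lemma abs_bc_succ_mul {ν : ℝ} (hν : 0 ≤ ν) (k : ℕ) :
    |bc ν (k+1)| = |bc ν k| / ((k+1) * (ν + k + 1)) := by
  rw [bc_succ hν k, abs_div, abs_neg, abs_of_pos (show (0:ℝ) < ((k:ℝ)+1)*(ν+k+1) by
    have := gamma_arg_pos hν k; positivity)]

lemma summable_bP_deriv {ν : ℝ} (hν : 0 ≤ ν) (t : ℝ) :
    Summable (fun k => bc ν k * ((k:ℝ) * t ^ (k-1))) := by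
  apply summable_of_ratio_norm_eventually_le (r := 1/2) (by norm_num)
  filter_upwards [eventually_ge_atTop (max 1 (Nat.ceil (2 * |t|)))] with k hk
  have hk1 : 1 ≤ k := le_trans (le_max_left _ _) hk
  have hk' : 2 * |t| ≤ k := le_trans (Nat.le_ceil _) (by
    exact_mod_cast le_trans (le_max_right _ _) hk)
  have hkr : (1:ℝ) ≤ (k:ℝ) := by exact_mod_cast hk1
  have e1 : k + 1 - 1 = k := rfl
  have e2 : t ^ (k-1) * t = t ^ k := by
    conv_rhs => rw [show k = (k-1)+1 from (Nat.succ_pred_eq_of_pos hk1).symm]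
    rw [pow_succ]
  simp only [norm_mul, Real.norm_eq_abs, e1]
  rw [abs_bc_succ_mul hν k]
  have hg := gamma_arg_pos hν k
  have h1 : |(k:ℝ)+1| = (k:ℝ)+1 := abs_of_pos (by positivity)
  have h2 : |(k:ℝ)| = (k:ℝ) := abs_of_nonneg (Nat.cast_nonneg k)
  push_cast
  rw [h1, h2]
  have habs : |t ^ k| = |t ^ (k-1)| * |t| := by rw [← abs_mul, e2]
  rw [habs]
  have key : |t| * ((k:ℝ)+1) ≤ ((k+1) * (ν + k + 1)) * ((k:ℝ)/2) := by
    have hq : (1:ℝ) ≤ ν + k + 1 := by linarith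
    have h3 : |t| ≤ (k:ℝ)/2 := by linarith
    have h4 : |t| * ((k:ℝ)+1) ≤ ((k:ℝ)/2) * ((k:ℝ)+1) := by
      apply mul_le_mul_of_nonneg_right h3 (by positivity)
    have h5 : ((k:ℝ)/2*((k:ℝ)+1)) * 1 ≤ ((k:ℝ)/2*((k:ℝ)+1)) * (ν+(k:ℝ)+1) :=
      mul_le_mul_of_nonneg_left hq (by positivity)
    nlinarith [abs_nonneg t]
  have hb0 : (0:ℝ) ≤ |bc ν k| * |t^(k-1)| := by positivity
  rw [div_mul_eq_mul_div, div_le_iff₀ (by positivity)]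
  calc |bc ν k| * (((k:ℝ)+1) * (|t^(k-1)| * |t|))
      = (|bc ν k| * |t^(k-1)|) * (|t| * ((k:ℝ)+1)) := by ring
    _ ≤ (|bc ν k| * |t^(k-1)|) * (((k+1) * (ν + k + 1)) * ((k:ℝ)/2)) :=
        mul_le_mul_of_nonneg_left key hb0
    _ = 1/2 * (|bc ν k| * ((k:ℝ) * |t^(k-1)|)) * ((k+1) * (ν + k + 1)) := by ring

lemma tsum_bP_deriv {ν : ℝ} (hν : 0 ≤ ν) (t : ℝ) :
    ∑' k : ℕ, bc ν k * ((k:ℝ) * t ^ (k-1)) = - bP (ν+1) t := by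
  rw [Summable.tsum_eq_zero_add (summable_bP_deriv hν t)]
  simp only [Nat.cast_zero, zero_mul, mul_zero, zero_add]
  have key : ∀ k : ℕ, bc ν (k+1) * ((((k+1):ℕ):ℝ) * t ^ (k+1-1)) = -(bc (ν+1) k * t^k) := by
    intro k
    have e : k+1-1 = k := rfl
    rw [e, bc_succ hν k, bc_shift hν k]
    have h1 : ((k:ℝ)+1) ≠ 0 := by positivity
    have h2 := (gamma_arg_pos hν k).ne'
    push_cast
    field_simp
  rw [tsum_congr key, tsum_neg]
  rfl

lemma hasDerivAt_bP {ν : ℝ} (hν : 0 ≤ ν) (t : ℝ) :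
    HasDerivAt (bP ν) (- bP (ν+1) t) t := by
  rw [← tsum_bP_deriv hν t]
  unfold bP
  set R := |t| + 1 with hR
  have hR0 : (0:ℝ) < R := by have := abs_nonneg t; rw [hR]; linarith
  have htR : t ∈ Metric.ball (0:ℝ) R := by
    have : |t| < R := by rw [hR]; linarith [abs_nonneg t]
    simpa [Metric.mem_ball, Real.dist_eq] using this
  have hbound : ∀ (k : ℕ) (y : ℝ), y ∈ Metric.ball (0:ℝ) R →
      ‖bc ν k * ((k:ℝ) * y ^ (k-1))‖ ≤ |bc ν k| * ((k:ℝ) * R ^ (k-1)) := by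
    intro k y hy
    have hyR : |y| ≤ R := by
      have : |y| < R := by simpa [Metric.mem_ball, Real.dist_eq] using hy
      linarith
    simp only [Real.norm_eq_abs, abs_mul]
    have h2 : |(k:ℝ)| = (k:ℝ) := abs_of_nonneg (Nat.cast_nonneg k)
    rw [h2]
    have h3 : |y ^ (k-1)| ≤ R ^(k-1) := by
      rw [abs_pow]; exact pow_le_pow_left₀ (abs_nonneg y) hyR _
    exact mul_le_mul_of_nonneg_left
      (mul_le_mul_of_nonneg_left h3 (Nat.cast_nonneg k)) (abs_nonneg _)
  have hu : Summable (fun k : ℕ => |bc ν k| * ((k:ℝ) * R ^ (k-1))) := by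
    have h := (summable_bP_deriv hν R).abs
    apply h.congr
    intro k
    rw [abs_mul, abs_mul, abs_of_nonneg (Nat.cast_nonneg k : (0:ℝ) ≤ (k:ℝ)),
      abs_of_nonneg (pow_nonneg hR0.le _)]
  exact hasDerivAt_tsum_of_isPreconnected hu
    Metric.isOpen_ball (convex_ball _ _).isPreconnected
    (fun k y _ => (hasDerivAt_pow k y).const_mul (bc ν k))
    hbound htR (summable_bP hν t) htR

lemma continuous_bP {ν : ℝ} (hν : 0 ≤ ν) : Continuous (bP ν) :=
  continuous_iff_continuousAt.2 fun t => (hasDerivAt_bP hν t).continuousAt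

lemma bP_zero {ν : ℝ} (hν : 0 ≤ ν) : bP ν 0 = 1 / Real.Gamma (ν + 1) := by
  unfold bP
  rw [Summable.tsum_eq_zero_add (summable_bP hν 0)]
  have : ∀ k : ℕ, bc ν (k+1) * (0:ℝ)^(k+1) = 0 := by intro k; simp
  rw [tsum_congr this, tsum_zero]
  have : bc ν 0 = 1 / Real.Gamma (ν + 1) := by unfold bc; norm_num
  simpa using this

lemma bP_rec {ν : ℝ} (hν : 0 ≤ ν) (t : ℝ) :
    bP ν t = (ν+1) * bP (ν+1) t - t * bP (ν+2) t := by
  have hν1 : (0:ℝ) ≤ ν + 1 := by linarith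
  have hν2 : (0:ℝ) ≤ ν + 2 := by linarith
  have hP2 : bP (ν+2) t = bP ((ν+1)+1) t := by rw [show ν+2 = ν+1+1 by ring]
  have hA : (ν+1) * bP (ν+1) t = ∑' k : ℕ, (ν+1) * (bc (ν+1) k * t^k) := by
    rw [bP, ← tsum_mul_left]
  have hB : t * bP (ν+2) t = ∑' k : ℕ, bc (ν+2) k * t^(k+1) := by
    rw [bP, ← tsum_mul_left]
    exact tsum_congr fun k => by ring
  rw [hA, hB]
  have hsumA : Summable (fun k : ℕ => (ν+1) * (bc (ν+1) k * t^k)) :=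
    (summable_bP hν1 t).mul_left _
  have hsumB : Summable (fun k : ℕ => bc (ν+2) k * t^(k+1)) := by
    have h := (summable_bP hν2 t).mul_right t
    apply h.congr; intro k; simp [pow_succ]; ring
  rw [Summable.tsum_eq_zero_add hsumA, bP, Summable.tsum_eq_zero_add (summable_bP hν t)]
  have h0 : bc ν 0 * t^0 = (ν+1) * (bc (ν+1) 0 * t^0) - 0 := by
    simp only [pow_zero, mul_one, sub_zero]
    rw [bc_shift hν 0]
    have := (gamma_arg_pos hν 0).ne'
    field_simp
    simp
  have hterm : ∀ k : ℕ, bc ν (k+1) * t^(k+1)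
      = (ν+1) * (bc (ν+1) (k+1) * t^(k+1)) - bc (ν+2) k * t^(k+1) := by
    intro k
    have e1 : bc (ν+1) (k+1) = -(bc ν k / (ν+k+1)) / ((k+1) * ((ν+1) + k + 1)) := by
      rw [bc_succ hν1 k, bc_shift hν k]
    have e2 : bc (ν+2) k = bc ν k / ((ν+k+1) * (ν+k+2)) := by
      have : bc (ν+2) k = bc ((ν+1)+1) k := by rw [show ν+2 = ν+1+1 by ring]
      rw [this, bc_shift hν1 k, bc_shift hν k]
      have h1 := (gamma_arg_pos hν k).ne'
      have h2 : (ν + 1 + (k:ℝ) + 1) = ν + k + 2 := by ring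
      rw [h2]
      field_simp
    rw [bc_succ hν k, e1, e2]
    have h1 := (gamma_arg_pos hν k).ne'
    have h2 : (ν + (k:ℝ) + 2) ≠ 0 := by have := gamma_arg_pos hν k; positivity
    have h3 : ((k:ℝ) + 1) ≠ 0 := by positivity
    have h4 : (ν + 1 + (k:ℝ) + 1) = ν + k + 2 := by ring
    rw [h4]
    field_simp
    ring
  rw [tsum_congr hterm]
  have hsA' : Summable (fun k : ℕ => (ν+1) * (bc (ν+1) (k+1) * t^(k+1))) := by
    have := (summable_nat_add_iff 1).mpr hsumA
    apply this.congr; intro k; simp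
  have hsB' : Summable (fun k : ℕ => bc (ν+2) k * t^(k+1)) := hsumB
  rw [Summable.tsum_sub hsA' hsB', h0]
  ring

lemma besselJ_eq {ν : ℝ} (x : ℝ) (hx : 0 < x) :
    besselJ ν x = (x/2)^ν * bP ν ((x/2)^2) := by
  unfold besselJ bP bc
  rw [← tsum_mul_left]
  apply tsum_congr
  intro k
  have h2 : (0:ℝ) < x/2 := by linarith
  have e1 : (x/2) ^ (ν + 2*(k:ℝ)) = (x/2)^ν * (x/2)^(2*(k:ℝ)) := Real.rpow_add h2 _ _
  have e2 : (x/2) ^ (2*(k:ℝ)) = ((x/2)^2)^k := by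
    rw [show (2*(k:ℝ)) = ((2*k : ℕ) : ℝ) by push_cast; ring, Real.rpow_natCast, pow_mul]
  rw [e1, e2]
  ring

lemma hasDerivAt_besselJ {ν : ℝ} (hν : 0 ≤ ν) {x : ℝ} (hx : 0 < x) :
    HasDerivAt (besselJ ν) (ν/x * besselJ ν x - besselJ (ν+1) x) x := by
  have h2 : (0:ℝ) < x/2 := by linarith
  set F : ℝ → ℝ := fun y => (y/2)^ν * bP ν ((y/2)^2) with hF
  have hEq : besselJ ν =ᶠ[𝓝 x] F := by
    filter_upwards [isOpen_Ioi.mem_nhds (show x ∈ Ioi (0:ℝ) from hx)] with y hy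
    exact besselJ_eq y hy
  have hinner : HasDerivAt (fun y : ℝ => y/2) (1/2) x := (hasDerivAt_id x).div_const 2
  have hpow : HasDerivAt (fun y : ℝ => (y/2)^ν) (ν * (x/2)^(ν-1) * (1/2)) x := by
    have houter := Real.hasDerivAt_rpow_const (x := x/2) (p := ν) (Or.inl h2.ne')
    exact HasDerivAt.comp x houter hinner
  have hsq : HasDerivAt (fun y : ℝ => (y/2)^2) ((2:ℕ) * (x/2)^1 * (1/2)) x := hinner.pow 2
  have hPc : HasDerivAt (fun y : ℝ => bP ν ((y/2)^2))
      (- bP (ν+1) ((x/2)^2) * ((2:ℕ) * (x/2)^1 * (1/2))) x :=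
    by have := (hasDerivAt_bP hν ((x/2)^2)).comp x hsq; exact this
  have hf : HasDerivAt F
      ((ν * (x/2)^(ν-1) * (1/2)) * bP ν ((x/2)^2)
        + (x/2)^ν * (- bP (ν+1) ((x/2)^2) * ((2:ℕ) * (x/2)^1 * (1/2)))) x := hpow.mul hPc
  have hval : (ν * (x/2)^(ν-1) * (1/2)) * bP ν ((x/2)^2)
        + (x/2)^ν * (- bP (ν+1) ((x/2)^2) * ((2:ℕ) * (x/2)^1 * (1/2)))
      = ν/x * besselJ ν x - besselJ (ν+1) x := by
    rw [besselJ_eq x hx, besselJ_eq x hx]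
    have e1 : (x/2)^(ν-1) = (x/2)^ν / (x/2) := by
      rw [Real.rpow_sub h2, Real.rpow_one]
    have e2 : (x/2)^(ν+1) = (x/2)^ν * (x/2) := Real.rpow_add_one h2.ne' ν
    rw [e1, e2]
    have hx' : x ≠ 0 := hx.ne'
    field_simp
    ring
  rw [← hval]
  exact hf.congr_of_eventuallyEq hEq

lemma besselJ_three_term {ν : ℝ} (hν : 0 ≤ ν) {x : ℝ} (hx : 0 < x) :
    besselJ ν x = 2*(ν+1)/x * besselJ (ν+1) x - besselJ (ν+2) x := by
  have h2 : (0:ℝ) < x/2 := by linarith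
  rw [besselJ_eq x hx, besselJ_eq x hx, besselJ_eq x hx, bP_rec hν ((x/2)^2)]
  have e2 : (x/2)^(ν+1) = (x/2)^ν * (x/2) := Real.rpow_add_one h2.ne' ν
  have e3 : (x/2)^(ν+2) = (x/2)^ν * (x/2) * (x/2) := by
    rw [show ν+2 = (ν+1)+1 by ring, Real.rpow_add_one h2.ne', e2]
  rw [e2, e3]
  have hx' : x ≠ 0 := hx.ne'
  field_simp

lemma hasDerivAt_besselJ' {ν : ℝ} (hν : 0 ≤ ν) {x : ℝ} (hx : 0 < x) :
    HasDerivAt (besselJ (ν+1)) (besselJ ν x - (ν+1)/x * besselJ (ν+1) x) x := by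
  have h := hasDerivAt_besselJ (show (0:ℝ) ≤ ν+1 by linarith) hx
  have e : (ν+1)/x * besselJ (ν+1) x - besselJ (ν+1+1) x
      = besselJ ν x - (ν+1)/x * besselJ (ν+1) x := by
    have h3 := besselJ_three_term hν hx
    rw [show ν+1+1 = ν+2 by ring]
    have hx' : x ≠ 0 := hx.ne'
    field_simp at h3 ⊢
    linarith
  rwa [e] at h

lemma deriv_besselJ {ν : ℝ} (hν : 0 ≤ ν) {x : ℝ} (hx : 0 < x) :
    deriv (besselJ ν) x = ν/x * besselJ ν x - besselJ (ν+1) x :=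
  (hasDerivAt_besselJ hν hx).deriv

lemma hasDerivAt_deriv_besselJ {ν : ℝ} (hν : 0 ≤ ν) {x : ℝ} (hx : 0 < x) :
    HasDerivAt (deriv (besselJ ν))
      ((ν^2/x^2 - 1) * besselJ ν x - deriv (besselJ ν) x / x) x := by
  set F2 : ℝ → ℝ := fun y => ν/y * besselJ ν y - besselJ (ν+1) y with hF2
  have hEq : deriv (besselJ ν) =ᶠ[𝓝 x] F2 := by
    filter_upwards [isOpen_Ioi.mem_nhds (show x ∈ Ioi (0:ℝ) from hx)] with y hy
    exact deriv_besselJ hν hy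
  have hdiv : HasDerivAt (fun y : ℝ => ν/y) (ν * (-(x^2)⁻¹)) x := by
    have := (hasDerivAt_inv hx.ne').const_mul ν
    simpa [div_eq_mul_inv] using this
  have hJ := hasDerivAt_besselJ hν hx
  have hJ1 := hasDerivAt_besselJ' hν hx
  have hf : HasDerivAt F2
      ((ν * (-(x^2)⁻¹)) * besselJ ν x + ν/x * (ν/x * besselJ ν x - besselJ (ν+1) x)
        - (besselJ ν x - (ν+1)/x * besselJ (ν+1) x)) x := (hdiv.mul hJ).sub hJ1
  have hval : (ν * (-(x^2)⁻¹)) * besselJ ν x + ν/x * (ν/x * besselJ ν x - besselJ (ν+1) x)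
        - (besselJ ν x - (ν+1)/x * besselJ (ν+1) x)
      = (ν^2/x^2 - 1) * besselJ ν x - deriv (besselJ ν) x / x := by
    rw [deriv_besselJ hν hx]
    have hx' : x ≠ 0 := hx.ne'
    field_simp
    ring
  rw [← hval]
  exact hf.congr_of_eventuallyEq hEq

lemma sign_right_of_deriv_neg {g : ℝ → ℝ} {a d : ℝ} (h : HasDerivAt g d a)
    (h0 : g a = 0) (hd : d < 0) :
    ∃ δ > 0, (∀ y, a < y → y < a + δ → g y < 0) ∧ (∀ y, a - δ < y → y < a → 0 < g y) := by
  rw [hasDerivAt_iff_tendsto_slope] at h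
  have h2 : ∀ᶠ y in 𝓝[≠] a, slope g a y < d/2 := h.eventually_lt_const (by linarith)
  rw [eventually_nhdsWithin_iff] at h2
  rw [Metric.eventually_nhds_iff] at h2
  obtain ⟨δ, hδ, hball⟩ := h2
  refine ⟨δ, hδ, ?_, ?_⟩
  · intro y hy1 hy2
    have hne : y ∈ ({a}ᶜ : Set ℝ) := by simp; linarith
    have hdist : dist y a < δ := by rw [Real.dist_eq, abs_of_pos (by linarith : 0 < y - a)]; linarith
    have := hball hdist hne
    simp only [mem_Iio, slope_def_field] at this
    have hslope : (g y - g a) / (y - a) < d/2 := this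
    rw [h0, sub_zero] at hslope
    have : g y < (d/2) * (y - a) := by
      rw [div_lt_iff₀ (by linarith : 0 < y - a)] at hslope
      linarith
    nlinarith
  · intro y hy1 hy2
    have hne : y ∈ ({a}ᶜ : Set ℝ) := by simp; linarith
    have hdist : dist y a < δ := by rw [Real.dist_eq, abs_of_neg (by linarith : y - a < 0)]; linarith
    have := hball hdist hne
    simp only [mem_Iio, slope_def_field] at this
    rw [h0, sub_zero] at this
    have h3 : (d/2) * (y - a) < g y := by
      rw [div_lt_iff_of_neg (by linarith : y - a < 0)] at this
      linarith
    nlinarith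

lemma sign_right_of_deriv_pos {g : ℝ → ℝ} {a d : ℝ} (h : HasDerivAt g d a)
    (h0 : g a = 0) (hd : 0 < d) :
    ∃ δ > 0, (∀ y, a < y → y < a + δ → 0 < g y) ∧ (∀ y, a - δ < y → y < a → g y < 0) := by
  obtain ⟨δ, hδ, h1, h2⟩ := sign_right_of_deriv_neg h.neg (by simp [h0]) (by linarith)
  exact ⟨δ, hδ, fun y hy1 hy2 => by have := h1 y hy1 hy2; simp at this; linarith,
    fun y hy1 hy2 => by have := h2 y hy1 hy2; simp at this; linarith⟩

lemma exists_zero_between {g : ℝ → ℝ} {u v : ℝ} (huv : u < v)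
    (hc : ContinuousOn g (Icc u v)) (h : g u * g v < 0) :
    ∃ c ∈ Ioo u v, g c = 0 := by
  rcases mul_neg_iff.1 h with ⟨hu, hv⟩ | ⟨hu, hv⟩
  · have : (0:ℝ) ∈ Ioo (g v) (g u) := ⟨hv, hu⟩
    obtain ⟨c, hc1, hc2⟩ := intermediate_value_Ioo' huv.le hc this
    exact ⟨c, hc1, hc2⟩
  · have : (0:ℝ) ∈ Ioo (g u) (g v) := ⟨hu, hv⟩
    obtain ⟨c, hc1, hc2⟩ := intermediate_value_Ioo huv.le hc this
    exact ⟨c, hc1, hc2⟩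

lemma pos_on_of_pos_of_ne {g : ℝ → ℝ} {u v w : ℝ}
    (hc : ContinuousOn g (Ioo u v)) (hnz : ∀ y ∈ Ioo u v, g y ≠ 0)
    (hw : w ∈ Ioo u v) (hgw : 0 < g w) : ∀ y ∈ Ioo u v, 0 < g y := by
  intro y hy
  by_contra hneg
  push_neg at hneg
  have hy0 : g y < 0 := lt_of_le_of_ne hneg (hnz y hy)
  have hyw : y ≠ w := fun h => by rw [h] at hy0; linarith
  rcases lt_or_gt_of_ne hyw with h | h
  · obtain ⟨c, hc1, hc2⟩ := exists_zero_between h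
      (hc.mono (fun x hx => ⟨lt_of_lt_of_le hy.1 hx.1, lt_of_le_of_lt hx.2 hw.2⟩))
      (by nlinarith)
    exact hnz c ⟨lt_trans hy.1 hc1.1, lt_trans hc1.2 hw.2⟩ hc2
  · obtain ⟨c, hc1, hc2⟩ := exists_zero_between h
      (hc.mono (fun x hx => ⟨lt_of_lt_of_le hw.1 hx.1, lt_of_le_of_lt hx.2 hy.2⟩))
      (by nlinarith)
    exact hnz c ⟨lt_trans hw.1 hc1.1, lt_trans hc1.2 hy.2⟩ hc2

lemma neg_on_of_neg_of_ne {g : ℝ → ℝ} {u v w : ℝ}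
    (hc : ContinuousOn g (Ioo u v)) (hnz : ∀ y ∈ Ioo u v, g y ≠ 0)
    (hw : w ∈ Ioo u v) (hgw : g w < 0) : ∀ y ∈ Ioo u v, g y < 0 := by
  have h := pos_on_of_pos_of_ne (g := fun y => -(g y)) (hc.neg)
    (fun y hy => neg_ne_zero.2 (hnz y hy)) hw (by simpa using neg_pos.2 hgw)
  intro y hy
  have h2 : (0:ℝ) < -(g y) := by simpa using h y hy
  linarith

namespace IsPosZeroSeq

variable {f : ℝ → ℝ} {z : ℕ → ℝ}

lemma le_of_index_le (Z : IsPosZeroSeq f z) {s t : ℕ} (hs : 1 ≤ s) (hst : s ≤ t) :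
    z s ≤ z t := by
  rcases eq_or_lt_of_le hst with h | h
  · rw [h]
  · exact (Z.mono s t hs h).le

lemma no_zero_before (Z : IsPosZeroSeq f z) {x : ℝ} (hx : 0 < x) (hx1 : x < z 1) :
    f x ≠ 0 := by
  intro h0
  obtain ⟨s, hs, hzs⟩ := Z.complete x hx h0
  have := Z.le_of_index_le (le_refl 1) hs
  rw [hzs] at this
  linarith

lemma no_zero_between (Z : IsPosZeroSeq f z) {s : ℕ} (hs : 1 ≤ s) {x : ℝ}
    (h1 : z s < x) (h2 : x < z (s+1)) : f x ≠ 0 := by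
  intro h0
  have hx : 0 < x := lt_trans (Z.pos s hs) h1
  obtain ⟨t, ht, hzt⟩ := Z.complete x hx h0
  rcases le_or_gt t s with h | h
  · have := Z.le_of_index_le ht h
    rw [hzt] at this; linarith
  · have := Z.le_of_index_le (by omega : 1 ≤ s+1) (by omega : s+1 ≤ t)
    rw [hzt] at this; linarith

end IsPosZeroSeq

-- Γ(ν + k + 1) ≥ (ν+1)^k Γ(ν+1)
lemma bGamma_lower {ν : ℝ} (hν : 0 ≤ ν) (k : ℕ) :
    (ν+1)^k * Real.Gamma (ν + 1) ≤ Real.Gamma (ν + k + 1) := by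
  induction k with
  | zero => simp
  | succ n ih =>
    have h1 : Real.Gamma (ν + (n+1:ℕ) + 1) = (ν + n + 1) * Real.Gamma (ν + n + 1) := by
      push_cast
      rw [show ν + ((n:ℝ)+1) + 1 = ν + n + 2 by ring]
      exact bGamma_succ hν n
    rw [h1, pow_succ]
    have h2 : (ν+1) ≤ ν + n + 1 := by
      have : (0:ℝ) ≤ n := Nat.cast_nonneg n
      linarith
    have h3 : (0:ℝ) < (ν+1)^n := by positivity
    have h4 := bGamma_pos hν n
    calc (ν+1)^n * (ν+1) * Real.Gamma (ν+1) = (ν+1) * ((ν+1)^n * Real.Gamma (ν+1)) := by ring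
      _ ≤ (ν+1) * Real.Gamma (ν + n + 1) := by
          apply mul_le_mul_of_nonneg_left ih (by linarith)
      _ ≤ (ν + n + 1) * Real.Gamma (ν + n + 1) := by
          apply mul_le_mul_of_nonneg_right h2 h4.le

lemma bP_pos_of_large {μ t : ℝ} (hμ : 0 ≤ μ) (ht : 0 ≤ t) (hlarge : 2*t ≤ μ) :
    0 < bP μ t := by
  have hΓ : 0 < Real.Gamma (μ + 1) := Real.Gamma_pos_of_pos (by linarith)
  set q : ℝ := t / (μ + 1) with hq
  have hμ1 : (0:ℝ) < μ + 1 := by linarith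
  have hq0 : 0 ≤ q := div_nonneg ht hμ1.le
  have hq2 : q < 1/2 := by
    rw [hq, div_lt_iff₀ hμ1]
    linarith
  have hbound : ∀ k : ℕ, ‖bc μ (k+1) * t^(k+1)‖ ≤ (1/Real.Gamma (μ+1)) * q^(k+1) := by
    intro k
    rw [norm_mul, Real.norm_eq_abs, Real.norm_eq_abs, abs_bc hμ (k+1), abs_pow,
      abs_of_nonneg ht]
    have hf : (1:ℝ) ≤ ((k+1).factorial : ℝ) := by exact_mod_cast Nat.one_le_iff_ne_zero.2 (Nat.factorial_ne_zero _)
    have hg : (μ+1)^(k+1) * Real.Gamma (μ + 1) ≤ Real.Gamma (μ + (k+1:ℕ) + 1) :=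
      bGamma_lower hμ (k+1)
    have hgpos := bGamma_pos hμ (k+1)
    have h1 : (1:ℝ) / (((k+1).factorial : ℝ) * Real.Gamma (μ + (k+1:ℕ) + 1))
        ≤ 1 / ((μ+1)^(k+1) * Real.Gamma (μ + 1)) := by
      apply one_div_le_one_div_of_le (by positivity)
      calc (μ+1)^(k+1) * Real.Gamma (μ+1) ≤ Real.Gamma (μ + (k+1:ℕ) + 1) := hg
        _ = 1 * Real.Gamma (μ + (k+1:ℕ) + 1) := by ring
        _ ≤ ((k+1).factorial : ℝ) * Real.Gamma (μ + (k+1:ℕ) + 1) := by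
            apply mul_le_mul_of_nonneg_right hf hgpos.le
    calc 1 / (((k+1).factorial:ℝ) * Real.Gamma (μ + (k+1:ℕ) + 1)) * t^(k+1)
        ≤ 1 / ((μ+1)^(k+1) * Real.Gamma (μ + 1)) * t^(k+1) := by
          apply mul_le_mul_of_nonneg_right h1 (by positivity)
      _ = (1/Real.Gamma (μ+1)) * q^(k+1) := by
          rw [hq, div_pow]
          have h5 : ((μ:ℝ)+1)^(k+1) ≠ 0 := by positivity
          field_simp
  have hgeo : Summable (fun k : ℕ => (1/Real.Gamma (μ+1)) * q^(k+1)) := by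
    apply Summable.mul_left
    exact ((summable_geometric_of_lt_one hq0 (by linarith)).comp_injective
      (add_left_injective 1))
  have htail : ‖∑' k : ℕ, bc μ (k+1) * t^(k+1)‖ ≤ ∑' k : ℕ, (1/Real.Gamma (μ+1)) * q^(k+1) :=
    tsum_of_norm_bounded hgeo.hasSum hbound
  have hgeoval : ∑' k : ℕ, (1/Real.Gamma (μ+1)) * q^(k+1)
      = (1/Real.Gamma (μ+1)) * (q * (1-q)⁻¹) := by
    rw [tsum_mul_left]
    congr 1
    have : ∀ k : ℕ, q^(k+1) = q * q^k := fun k => by ring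
    rw [tsum_congr this, tsum_mul_left, tsum_geometric_of_lt_one hq0 (by linarith)]
  have hlt : (1/Real.Gamma (μ+1)) * (q * (1-q)⁻¹) < 1/Real.Gamma (μ+1) := by
    have h1q : (0:ℝ) < 1 - q := by linarith
    have : q * (1-q)⁻¹ < 1 := by
      rw [mul_inv_lt_iff₀ h1q]
      linarith
    have hpos : (0:ℝ) < 1/Real.Gamma (μ+1) := by positivity
    nlinarith
  have hsplit : bP μ t = bc μ 0 * t^0 + ∑' k : ℕ, bc μ (k+1) * t^(k+1) := by
    rw [bP, Summable.tsum_eq_zero_add (summable_bP hμ t)]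
  have hbc0 : bc μ 0 * t^0 = 1/Real.Gamma (μ+1) := by
    unfold bc; norm_num
  rw [hsplit, hbc0]
  have habs : |∑' k : ℕ, bc μ (k+1) * t^(k+1)| ≤ (1/Real.Gamma (μ+1)) * (q * (1-q)⁻¹) := by
    rw [← hgeoval]
    rwa [Real.norm_eq_abs] at htail
  have h6 := abs_le.1 habs
  linarith [h6.1]

lemma besselJ_pos_of_large {μ x : ℝ} (hμ : 0 ≤ μ) (hx : 0 < x) (hlarge : 2*((x/2)^2) ≤ μ) :
    0 < besselJ μ x := by
  rw [besselJ_eq x hx]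
  have h1 : (0:ℝ) < (x/2)^μ := Real.rpow_pos_of_pos (by linarith) μ
  have h2 := bP_pos_of_large hμ (by positivity : (0:ℝ) ≤ (x/2)^2) hlarge
  positivity

lemma continuousOn_besselJ {ν : ℝ} (hν : 0 ≤ ν) : ContinuousOn (besselJ ν) (Ioi 0) :=
  fun x hx => ((hasDerivAt_besselJ hν hx).continuousAt).continuousWithinAt

lemma continuousOn_deriv_besselJ {ν : ℝ} (hν : 0 ≤ ν) :
    ContinuousOn (deriv (besselJ ν)) (Ioi 0) :=
  fun x hx => ((hasDerivAt_deriv_besselJ hν hx).continuousAt).continuousWithinAt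

-- propagation of common zeros
lemma besselJ_chain {ν a : ℝ} (hν : 0 ≤ ν) (ha : 0 < a)
    (h1 : besselJ ν a = 0) (h2 : besselJ (ν+1) a = 0) :
    ∀ n : ℕ, besselJ (ν + n) a = 0 ∧ besselJ (ν + n + 1) a = 0 := by
  intro n
  induction n with
  | zero => constructor <;> simpa
  | succ n ih =>
    obtain ⟨ihl, ihr⟩ := ih
    set μ : ℝ := ν + n with hμdef
    have hμ : 0 ≤ μ := by have : (0:ℝ) ≤ n := Nat.cast_nonneg n; rw [hμdef]; linarith
    have e1 := (hasDerivAt_besselJ' hμ ha).deriv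
    have e2 := deriv_besselJ (show (0:ℝ) ≤ μ+1 by linarith) ha
    rw [e2, ihl, ihr] at e1
    have h3 : besselJ (μ + 1 + 1) a = 0 := by linarith [e1]
    constructor
    · push_cast
      rw [show ν + ((n:ℝ)+1) = μ + 1 by rw [hμdef]; ring]
      exact ihr
    · push_cast
      rw [show ν + ((n:ℝ)+1) + 1 = μ + 1 + 1 by rw [hμdef]; ring]
      exact h3

lemma critical_value_ne_zero {ν a : ℝ} (hν : 0 ≤ ν) (ha : 0 < a)
    (hcrit : deriv (besselJ ν) a = 0) : besselJ ν a ≠ 0 := by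
  intro hJ
  have hJ1 : besselJ (ν+1) a = 0 := by
    have := deriv_besselJ hν ha
    rw [hcrit, hJ] at this
    linarith [this]
  set n : ℕ := Nat.ceil (2*((a/2)^2)) with hn
  have hchain := (besselJ_chain hν ha hJ hJ1 n).1
  have hlarge : 2*((a/2)^2) ≤ ν + n := by
    have := Nat.le_ceil (2*((a/2)^2))
    have hc : (0:ℝ) ≤ ν := hν
    calc 2*((a/2)^2) ≤ (n:ℝ) := by exact_mod_cast this
      _ ≤ ν + n := by linarith
  have hpos := besselJ_pos_of_large (by positivity : (0:ℝ) ≤ ν + n) ha hlarge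
  rw [hchain] at hpos
  exact lt_irrefl 0 hpos

-- second-derivative sign at a critical point
lemma hasDerivAt_deriv_at_crit {ν a : ℝ} (hν : 0 ≤ ν) (ha : 0 < a)
    (hcrit : deriv (besselJ ν) a = 0) :
    HasDerivAt (deriv (besselJ ν)) ((ν^2/a^2 - 1) * besselJ ν a) a := by
  have h := hasDerivAt_deriv_besselJ hν ha
  rwa [hcrit, zero_div, sub_zero] at h

-- derivative formula in product shape
lemma deriv_besselJ_eq_prod {ν : ℝ} (hν : 0 ≤ ν) {x : ℝ} (hx : 0 < x) :
    deriv (besselJ ν) x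
      = (x/2)^(ν-1) * ((ν/2) * bP ν ((x/2)^2) - (x/2)^2 * bP (ν+1) ((x/2)^2)) := by
  rw [deriv_besselJ hν hx, besselJ_eq x hx, besselJ_eq x hx]
  have h2 : (0:ℝ) < x/2 := by linarith
  have e1 : (x/2)^ν = (x/2)^(ν-1) * (x/2) := by
    rw [← Real.rpow_add_one h2.ne' (ν-1), sub_add_cancel]
  have e2 : (x/2)^(ν+1) = (x/2)^(ν-1) * (x/2) * (x/2) := by
    rw [show ν+1 = (ν-1)+1+1 by ring, Real.rpow_add_one h2.ne', Real.rpow_add_one h2.ne']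
  rw [e1, e2]
  have hx' : x ≠ 0 := hx.ne'
  field_simp

-- sign of J' near zero: positive case (ν > 0)
lemma deriv_besselJ_pos_near_zero {ν : ℝ} (hν : 0 < ν) :
    ∃ δ > 0, ∀ x, 0 < x → x < δ → 0 < deriv (besselJ ν) x := by
  set φ : ℝ → ℝ := fun t => (ν/2) * bP ν t - t * bP (ν+1) t with hφ
  have hφc : Continuous φ := by
    apply Continuous.sub
    · exact continuous_const.mul (continuous_bP hν.le)
    · exact continuous_id.mul (continuous_bP (by linarith))
  have hφ0 : 0 < φ 0 := by
    have := bP_zero hν.le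
    have hΓ : 0 < Real.Gamma (ν+1) := Real.Gamma_pos_of_pos (by linarith)
    simp only [hφ, zero_mul, sub_zero, this]
    positivity
  have hcont : ContinuousAt φ 0 := hφc.continuousAt
  obtain ⟨ε, hε, hball⟩ := Metric.continuousAt_iff.1 hcont (φ 0) hφ0
  refine ⟨2 * Real.sqrt ε, by positivity, ?_⟩
  intro x hx0 hxδ
  have h2 : (0:ℝ) < x/2 := by linarith
  have ht : dist ((x/2)^2) 0 < ε := by
    rw [Real.dist_eq, sub_zero, abs_of_pos (by positivity)]
    have : x/2 < Real.sqrt ε := by linarith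
    calc (x/2)^2 < (Real.sqrt ε)^2 := by nlinarith
      _ = ε := Real.sq_sqrt hε.le
  have hφt := hball ht
  rw [Real.dist_eq] at hφt
  have hφpos : 0 < φ ((x/2)^2) := by
    cases abs_lt.1 hφt with
    | intro h1 h2 => linarith
  rw [deriv_besselJ_eq_prod hν.le hx0]
  have hr : (0:ℝ) < (x/2)^(ν-1) := Real.rpow_pos_of_pos h2 _
  have : φ ((x/2)^2) = (ν/2) * bP ν ((x/2)^2) - (x/2)^2 * bP (ν+1) ((x/2)^2) := rfl
  rw [← this]
  positivity

-- sign of J' near zero: order 0 case (negative)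
lemma deriv_besselJ_neg_near_zero :
    ∃ δ > 0, ∀ x, 0 < x → x < δ → deriv (besselJ 0) x < 0 := by
  set ψ : ℝ → ℝ := fun t => bP 1 t with hψ
  have hψc : Continuous ψ := continuous_bP (by norm_num)
  have hψ0 : 0 < ψ 0 := by
    have h := bP_zero (show (0:ℝ) ≤ 1 by norm_num)
    have hΓ : 0 < Real.Gamma (1+1 : ℝ) := Real.Gamma_pos_of_pos (by norm_num)
    simp only [hψ, h]
    positivity
  obtain ⟨ε, hε, hball⟩ := Metric.continuousAt_iff.1 hψc.continuousAt (ψ 0) hψ0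
  refine ⟨2 * Real.sqrt ε, by positivity, ?_⟩
  intro x hx0 hxδ
  have h2 : (0:ℝ) < x/2 := by linarith
  have ht : dist ((x/2)^2) 0 < ε := by
    rw [Real.dist_eq, sub_zero, abs_of_pos (by positivity)]
    have : x/2 < Real.sqrt ε := by linarith
    calc (x/2)^2 < (Real.sqrt ε)^2 := by nlinarith
      _ = ε := Real.sq_sqrt hε.le
  have hψt := hball ht
  rw [Real.dist_eq] at hψt
  have hψpos : 0 < ψ ((x/2)^2) := by
    cases abs_lt.1 hψt with
    | intro ha hb => linarith
  rw [deriv_besselJ_eq_prod le_rfl hx0]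
  have hr : (0:ℝ) < (x/2)^((0:ℝ)-1) := Real.rpow_pos_of_pos h2 _
  have he : (0:ℝ)/2 * bP 0 ((x/2)^2) - (x/2)^2 * bP (0+1) ((x/2)^2)
      = -((x/2)^2 * ψ ((x/2)^2)) := by
    simp only [hψ]
    norm_num
  rw [he]
  have : (0:ℝ) < (x/2)^2 * ψ ((x/2)^2) := by positivity
  nlinarith

-- J' positive before the first zero of J' (order > 0)
lemma deriv_pos_before_first {μ : ℝ} (hμ : 0 < μ) {z : ℕ → ℝ}
    (Z : IsPosZeroSeq (deriv (besselJ μ)) z) :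
    ∀ y ∈ Ioo 0 (z 1), 0 < deriv (besselJ μ) y := by
  obtain ⟨δ, hδ, hpos⟩ := deriv_besselJ_pos_near_zero hμ
  have hz1 := Z.pos 1 le_rfl
  set w := min (δ/2) (z 1 / 2) with hw
  have hw0 : 0 < w := by positivity
  have hwδ : w < δ := lt_of_le_of_lt (min_le_left _ _) (by linarith)
  have hwz : w < z 1 := lt_of_le_of_lt (min_le_right _ _) (by linarith)
  apply pos_on_of_pos_of_ne
    ((continuousOn_deriv_besselJ hμ.le).mono (fun y hy => hy.1))
    (fun y hy => Z.no_zero_before hy.1 hy.2)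
    (⟨hw0, hwz⟩ : w ∈ Ioo 0 (z 1))
    (hpos w hw0 hwδ)

lemma deriv_neg_before_first {z : ℕ → ℝ}
    (Z : IsPosZeroSeq (deriv (besselJ 0)) z) :
    ∀ y ∈ Ioo 0 (z 1), deriv (besselJ 0) y < 0 := by
  obtain ⟨δ, hδ, hneg⟩ := deriv_besselJ_neg_near_zero
  have hz1 := Z.pos 1 le_rfl
  set w := min (δ/2) (z 1 / 2) with hw
  have hw0 : 0 < w := by positivity
  have hwδ : w < δ := lt_of_le_of_lt (min_le_left _ _) (by linarith)
  have hwz : w < z 1 := lt_of_le_of_lt (min_le_right _ _) (by linarith)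
  apply neg_on_of_neg_of_ne
    ((continuousOn_deriv_besselJ le_rfl).mono (fun y hy => hy.1))
    (fun y hy => Z.no_zero_before hy.1 hy.2)
    (⟨hw0, hwz⟩ : w ∈ Ioo 0 (z 1))
    (hneg w hw0 hwδ)

-- J tends to 0 at 0+ (μ > 0)
lemma besselJ_tendsto_zero {μ : ℝ} (hμ : 0 < μ) :
    Tendsto (besselJ μ) (𝓝[>] 0) (𝓝 0) := by
  have h1 : Tendsto (fun x : ℝ => (x/2)^μ * bP μ ((x/2)^2)) (𝓝[>] 0) (𝓝 0) := by
    have ha : Tendsto (fun x : ℝ => (x/2)^μ) (𝓝[>] 0) (𝓝 0) := by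
      have hc : ContinuousAt (fun y : ℝ => y^μ) 0 :=
        Real.continuousAt_rpow_const 0 μ (Or.inr hμ.le)
      have hz : ((0:ℝ))^μ = 0 := Real.zero_rpow hμ.ne'
      have hhalf : Tendsto (fun x : ℝ => x/2) (𝓝[>] 0) (𝓝 0) := by
        simpa using ((continuous_id.div_const (2:ℝ)).tendsto (0:ℝ)).mono_left
          (nhdsWithin_le_nhds : 𝓝[>] (0:ℝ) ≤ 𝓝 0)
      have := hc.tendsto.comp hhalf
      rwa [hz] at this
    have hb : Tendsto (fun x : ℝ => bP μ ((x/2)^2)) (𝓝[>] 0) (𝓝 (bP μ 0)) := by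
      have hc : Continuous (fun x : ℝ => bP μ ((x/2)^2)) :=
        (continuous_bP hμ.le).comp ((continuous_id.div_const 2).pow 2)
      have := hc.tendsto (0:ℝ)
      simp only [zero_div, zero_pow, ne_eq, OfNat.ofNat_ne_zero, not_false_eq_true] at this
      exact (this.mono_left nhdsWithin_le_nhds)
    have := ha.mul hb
    rwa [zero_mul] at this
  apply h1.congr'
  filter_upwards [self_mem_nhdsWithin] with x hx
  exact (besselJ_eq x hx).symm

-- J positive up to b if J' positive on (0, b)
lemma besselJ_pos_below {μ b : ℝ} (hμ : 0 < μ) (hb : 0 < b)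
    (hder : ∀ y ∈ Ioo 0 b, 0 < deriv (besselJ μ) y) :
    ∀ x ∈ Ioc 0 b, 0 < besselJ μ x := by
  have hmono : StrictMonoOn (besselJ μ) (Ioc 0 b) := by
    apply strictMonoOn_of_deriv_pos (convex_Ioc 0 b)
    · exact (continuousOn_besselJ hμ.le).mono (fun y hy => hy.1)
    · intro y hy
      rw [interior_Ioc] at hy
      exact hder y hy
  have hle : ∀ x ∈ Ioc 0 b, 0 ≤ besselJ μ x := by
    intro x hx
    have hev : ∀ᶠ y in 𝓝[>] (0:ℝ), besselJ μ y ≤ besselJ μ x := by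
      filter_upwards [Ioo_mem_nhdsGT_of_mem (by constructor <;> [exact le_rfl; exact hx.1] : (0:ℝ) ∈ Ico 0 x)] with y hy
      exact (hmono ⟨hy.1, le_trans hy.2.le hx.2⟩ hx hy.2).le
    exact le_of_tendsto (besselJ_tendsto_zero hμ) hev
  intro x hx
  have hx2 : x/2 ∈ Ioc 0 b := ⟨by linarith [hx.1], by linarith [hx.1, hx.2]⟩
  calc (0:ℝ) ≤ besselJ μ (x/2) := hle _ hx2
    _ < besselJ μ x := hmono hx2 hx (by linarith [hx.1])

-- the first zero of J'_μ is > μ (μ > 0)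
lemma first_zero_gt_order {μ : ℝ} (hμ : 0 < μ) {z : ℕ → ℝ}
    (Z : IsPosZeroSeq (deriv (besselJ μ)) z) : μ < z 1 := by
  by_contra hle
  push_neg at hle  -- z 1 ≤ μ
  have hz1 := Z.pos 1 le_rfl
  have hder := deriv_pos_before_first hμ Z
  have hJpos := besselJ_pos_below hμ hz1 hder
  set h : ℝ → ℝ := fun x => x * deriv (besselJ μ) x with hh
  have hmono : StrictMonoOn h (Ioc 0 (z 1)) := by
    apply strictMonoOn_of_deriv_pos (convex_Ioc 0 (z 1))
    · apply ContinuousOn.mul continuousOn_id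
      exact (continuousOn_deriv_besselJ hμ.le).mono (fun y hy => hy.1)
    · intro y hy
      rw [interior_Ioc] at hy
      have hy0 : 0 < y := hy.1
      have hD : HasDerivAt h
          (1 * deriv (besselJ μ) y + y * ((μ^2/y^2 - 1) * besselJ μ y - deriv (besselJ μ) y / y)) y :=
        (hasDerivAt_id y).mul (hasDerivAt_deriv_besselJ hμ.le hy0)
      rw [hD.deriv]
      have hJy : 0 < besselJ μ y := hJpos y ⟨hy0, hy.2.le⟩
      have he : 1 * deriv (besselJ μ) y + y * ((μ^2/y^2 - 1) * besselJ μ y - deriv (besselJ μ) y / y)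
          = (μ^2 - y^2)/y * besselJ μ y := by
        field_simp
        ring
      rw [he]
      have hyμ : y < μ := lt_of_lt_of_le hy.2 hle
      have : 0 < μ^2 - y^2 := by nlinarith
      positivity
  have hlt := hmono (⟨by linarith, by linarith⟩ : z 1/2 ∈ Ioc 0 (z 1))
    (⟨hz1, le_rfl⟩ : z 1 ∈ Ioc 0 (z 1)) (by linarith)
  have hz0 : h (z 1) = 0 := by
    simp only [hh]
    rw [Z.isZero 1 le_rfl, mul_zero]
  have hpos : 0 < h (z 1/2) := by
    simp only [hh]
    have := hder (z 1/2) ⟨by linarith, by linarith⟩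
    positivity
  rw [hz0] at hlt
  linarith

lemma SL1 {ν a : ℝ} (hν : 0 ≤ ν) (ha : 0 < a) (h0 : deriv (besselJ ν) a = 0) :
    deriv (besselJ (ν+1)) a = besselJ ν a * (1 - ν*(ν+1)/a^2) := by
  have h1 := deriv_besselJ hν ha
  rw [h0] at h1
  have hJ1 : besselJ (ν+1) a = ν/a * besselJ ν a := by linarith
  rw [(hasDerivAt_besselJ' hν ha).deriv, hJ1]
  have ha' : a ≠ 0 := ha.ne'
  field_simp

lemma SL2 {ν b : ℝ} (hν : 0 ≤ ν) (hb : 0 < b) (h0 : deriv (besselJ (ν+1)) b = 0) :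
    deriv (besselJ ν) b = - besselJ (ν+1) b * (1 - ν*(ν+1)/b^2) := by
  have h1 := (hasDerivAt_besselJ' hν hb).deriv
  rw [h0] at h1
  have hJ : besselJ ν b = (ν+1)/b * besselJ (ν+1) b := by linarith
  rw [deriv_besselJ hν hb, hJ]
  have hb' : b ≠ 0 := hb.ne'
  field_simp
  ring

lemma besselJ_alternate {μ u v : ℝ} (hμ : 0 ≤ μ) (hu : μ < u) (huv : u < v)
    (hgu : deriv (besselJ μ) u = 0) (hgv : deriv (besselJ μ) v = 0)
    (hno : ∀ y ∈ Ioo u v, deriv (besselJ μ) y ≠ 0) :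
    besselJ μ u * besselJ μ v < 0 := by
  have hu0 : 0 < u := lt_of_le_of_lt hμ hu
  have hv0 : 0 < v := lt_trans hu0 huv
  have hJu := critical_value_ne_zero hμ hu0 hgu
  have hJv := critical_value_ne_zero hμ hv0 hgv
  have hcu : μ^2/u^2 - 1 < 0 := by
    have : μ^2 < u^2 := by nlinarith
    have h2 : μ^2/u^2 < 1 := (div_lt_one (by positivity)).2 this
    linarith
  have hcv : μ^2/v^2 - 1 < 0 := by
    have : μ^2 < v^2 := by nlinarith
    have h2 : μ^2/v^2 < 1 := (div_lt_one (by positivity)).2 this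
    linarith
  have hdu := hasDerivAt_deriv_at_crit hμ hu0 hgu
  have hdv := hasDerivAt_deriv_at_crit hμ hv0 hgv
  have hcont : ContinuousOn (deriv (besselJ μ)) (Ioo u v) :=
    (continuousOn_deriv_besselJ hμ).mono (fun y hy => lt_trans hu0 hy.1)
  rcases lt_or_gt_of_ne hJu with hJuneg | hJupos
  · -- J u < 0, so d_u > 0, g > 0 on (u, v), and J v > 0
    have hd : 0 < (μ^2/u^2 - 1) * besselJ μ u := mul_pos_of_neg_of_neg hcu hJuneg
    obtain ⟨δ, hδ, hright, _⟩ := sign_right_of_deriv_pos hdu hgu hd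
    set w := min (u + δ/2) ((u+v)/2) with hwdef
    have hw1 : u < w := lt_min (by linarith) (by linarith)
    have hw2 : w < u + δ := lt_of_le_of_lt (min_le_left _ _) (by linarith)
    have hw3 : w < v := lt_of_le_of_lt (min_le_right _ _) (by linarith)
    have hgw : 0 < deriv (besselJ μ) w := hright w hw1 hw2
    have hallpos := pos_on_of_pos_of_ne hcont hno ⟨hw1, hw3⟩ hgw
    have hJvpos : 0 < besselJ μ v := by
      rcases lt_or_gt_of_ne hJv with hneg | hpos
      · exfalso
        have hd2 : 0 < (μ^2/v^2 - 1) * besselJ μ v := mul_pos_of_neg_of_neg hcv hneg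
        obtain ⟨δ', hδ', _, hleft⟩ := sign_right_of_deriv_pos hdv hgv hd2
        set y := max (v - δ'/2) ((u+v)/2) with hydef
        have hy1 : y < v := max_lt (by linarith) (by linarith)
        have hy2 : v - δ' < y := lt_of_lt_of_le (by linarith) (le_max_left _ _)
        have hy3 : u < y := lt_of_lt_of_le (by linarith) (le_max_right _ _)
        have := hleft y hy2 hy1
        have := hallpos y ⟨hy3, hy1⟩
        linarith
      · exact hpos
    exact mul_neg_of_neg_of_pos hJuneg hJvpos
  · -- J u > 0, so d_u < 0, g < 0 on (u, v), and J v < 0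
    have hd : (μ^2/u^2 - 1) * besselJ μ u < 0 := mul_neg_of_neg_of_pos hcu hJupos
    obtain ⟨δ, hδ, hright, _⟩ := sign_right_of_deriv_neg hdu hgu hd
    set w := min (u + δ/2) ((u+v)/2) with hwdef
    have hw1 : u < w := lt_min (by linarith) (by linarith)
    have hw2 : w < u + δ := lt_of_le_of_lt (min_le_left _ _) (by linarith)
    have hw3 : w < v := lt_of_le_of_lt (min_le_right _ _) (by linarith)
    have hgw : deriv (besselJ μ) w < 0 := hright w hw1 hw2
    have hallneg := neg_on_of_neg_of_ne hcont hno ⟨hw1, hw3⟩ hgw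
    have hJvneg : besselJ μ v < 0 := by
      rcases lt_or_gt_of_ne hJv with hneg | hpos
      · exact hneg
      · exfalso
        have hd2 : (μ^2/v^2 - 1) * besselJ μ v < 0 := mul_neg_of_neg_of_pos hcv hpos
        obtain ⟨δ', hδ', _, hleft⟩ := sign_right_of_deriv_neg hdv hgv hd2
        set y := max (v - δ'/2) ((u+v)/2) with hydef
        have hy1 : y < v := max_lt (by linarith) (by linarith)
        have hy2 : v - δ' < y := lt_of_lt_of_le (by linarith) (le_max_left _ _)
        have hy3 : u < y := lt_of_lt_of_le (by linarith) (le_max_right _ _)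
        have := hleft y hy2 hy1
        have := hallneg y ⟨hy3, hy1⟩
        linarith
    exact mul_neg_of_pos_of_neg hJupos hJvneg

lemma interlace_comb {f g : ℝ → ℝ} {a b : ℕ → ℝ}
    (Za : IsPosZeroSeq f a) (Zb : IsPosZeroSeq g b)
    (C1 : ∀ s, 1 ≤ s → ∃ c, a s < c ∧ c < a (s+1) ∧ g c = 0)
    (C2 : ∀ s, 1 ≤ s → ∃ c, b s < c ∧ c < b (s+1) ∧ f c = 0)
    (C3 : ∀ s, 1 ≤ s → g (a s) ≠ 0)
    (hbase : a 1 < b 1) : ∀ s, 1 ≤ s → a s < b s ∧ b s < a (s+1) := by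
  intro s hs
  induction s, hs using Nat.le_induction with
  | base =>
    refine ⟨hbase, ?_⟩
    obtain ⟨c, hc1, hc2, hc0⟩ := C1 1 le_rfl
    have hc_pos : 0 < c := lt_trans (Za.pos 1 le_rfl) hc1
    obtain ⟨t, ht, hbt⟩ := Zb.complete c hc_pos hc0
    have : b 1 ≤ b t := Zb.le_of_index_le le_rfl ht
    rw [hbt] at this
    linarith
  | succ s hs ih =>
    obtain ⟨ih1, ih2⟩ := ih
    have hstep1 : a (s+1) < b (s+1) := by
      rcases lt_trichotomy (b (s+1)) (a (s+1)) with hlt | heq | hgt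
      · exfalso
        obtain ⟨c, hc1, hc2, hc0⟩ := C2 s hs
        have hc_pos : 0 < c := lt_trans (Zb.pos s hs) hc1
        obtain ⟨t, ht, hat⟩ := Za.complete c hc_pos hc0
        have hgt_as : a s < a t := by rw [hat]; linarith
        have hlt_as1 : a t < a (s+1) := by rw [hat]; linarith
        rcases le_or_gt t s with h | h
        · have := Za.le_of_index_le ht h; linarith
        · have := Za.le_of_index_le (by omega : 1 ≤ s+1) h; linarith
      · exfalso
        exact C3 (s+1) (by omega) (by rw [← heq]; exact Zb.isZero (s+1) (by omega))
      · exact hgt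
    refine ⟨hstep1, ?_⟩
    obtain ⟨c, hc1, hc2, hc0⟩ := C1 (s+1) (by omega)
    have hc_pos : 0 < c := lt_trans (Za.pos (s+1) (by omega)) hc1
    obtain ⟨t, ht, hbt⟩ := Zb.complete c hc_pos hc0
    have htgt : s + 1 ≤ t := by
      by_contra hcon
      push_neg at hcon
      have hts : t ≤ s := by omega
      have := Zb.le_of_index_le ht hts
      rw [hbt] at this
      -- b t = c > a (s+1) > b s, but b t ≤ b s
      linarith
    have := Zb.le_of_index_le (by omega : 1 ≤ s+1) htgt
    rw [hbt] at this
    linarith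

lemma interlace_comb' {f g : ℝ → ℝ} {a b : ℕ → ℝ}
    (Za : IsPosZeroSeq f a) (Zb : IsPosZeroSeq g b)
    (C1 : ∀ s, 1 ≤ s → ∃ c, a s < c ∧ c < a (s+1) ∧ g c = 0)
    (C2 : ∀ s, 1 ≤ s → ∃ c, b s < c ∧ c < b (s+1) ∧ f c = 0)
    (C3 : ∀ s, 1 ≤ s → g (a s) ≠ 0)
    (hbase : b 1 < a 1) : ∀ s, 1 ≤ s → a s < b (s+1) ∧ b (s+1) < a (s+1) := by
  intro s hs
  induction s, hs using Nat.le_induction with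
  | base =>
    constructor
    · obtain ⟨c, hc1, hc2, hc0⟩ := C2 1 le_rfl
      have hc_pos : 0 < c := lt_trans (Zb.pos 1 le_rfl) hc1
      obtain ⟨t, ht, hat⟩ := Za.complete c hc_pos hc0
      have := Za.le_of_index_le le_rfl ht
      rw [hat] at this
      linarith
    · obtain ⟨c, hc1, hc2, hc0⟩ := C1 1 le_rfl
      have hc_pos : 0 < c := lt_trans (Za.pos 1 le_rfl) hc1
      obtain ⟨t, ht, hbt⟩ := Zb.complete c hc_pos hc0
      have ht2 : 2 ≤ t := by
        by_contra hcon
        push_neg at hcon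
        have ht1 : t = 1 := by omega
        rw [ht1] at hbt
        -- b 1 = c > a 1 > b 1
        linarith
      have := Zb.le_of_index_le (by omega : 1 ≤ 2) ht2
      rw [hbt] at this
      linarith
  | succ s hs ih =>
    obtain ⟨ih1, ih2⟩ := ih
    have hstep1 : a (s+1) < b (s+2) := by
      rcases lt_trichotomy (b (s+2)) (a (s+1)) with hlt | heq | hgt
      · exfalso
        obtain ⟨c, hc1, hc2, hc0⟩ := C2 (s+1) (by omega)
        have hc_pos : 0 < c := lt_trans (Zb.pos (s+1) (by omega)) hc1
        obtain ⟨t, ht, hat⟩ := Za.complete c hc_pos hc0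
        have hgt_as : a s < a t := by rw [hat]; linarith
        have hlt_as1 : a t < a (s+1) := by rw [hat]; linarith
        rcases le_or_gt t s with h | h
        · have := Za.le_of_index_le ht h; linarith
        · have := Za.le_of_index_le (by omega : 1 ≤ s+1) h; linarith
      · exfalso
        exact C3 (s+1) (by omega) (by rw [← heq]; exact Zb.isZero (s+2) (by omega))
      · exact hgt
    refine ⟨hstep1, ?_⟩
    obtain ⟨c, hc1, hc2, hc0⟩ := C1 (s+1) (by omega)
    have hc_pos : 0 < c := lt_trans (Za.pos (s+1) (by omega)) hc1
    obtain ⟨t, ht, hbt⟩ := Zb.complete c hc_pos hc0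
    have htgt : s + 2 ≤ t := by
      by_contra hcon
      push_neg at hcon
      have hts : t ≤ s + 1 := by omega
      have := Zb.le_of_index_le ht hts
      rw [hbt] at this
      linarith
    have := Zb.le_of_index_le (by omega : 1 ≤ s+2) htgt
    rw [hbt] at this
    linarith

section Core
variable {ν : ℝ} {a b : ℕ → ℝ}

-- facts about the b-sequence
lemma b_gt (hν : 0 ≤ ν) (Zb : IsPosZeroSeq (deriv (besselJ (ν+1))) b) :
    ∀ s, 1 ≤ s → ν + 1 < b s := fun s hs =>
  lt_of_lt_of_le (first_zero_gt_order (by linarith) Zb) (Zb.le_of_index_le le_rfl hs)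

lemma b_sq_gt (hν : 0 ≤ ν) (Zb : IsPosZeroSeq (deriv (besselJ (ν+1))) b) :
    ∀ s, 1 ≤ s → ν*(ν+1) < (b s)^2 := by
  intro s hs
  have h := b_gt hν Zb s hs
  nlinarith

lemma a_sq_gt (hν : 0 ≤ ν) (Za : IsPosZeroSeq (deriv (besselJ ν)) a)
    (hasq : ν*(ν+1) < (a 1)^2) : ∀ s, 1 ≤ s → ν*(ν+1) < (a s)^2 := by
  intro s hs
  have h1 := Za.pos 1 le_rfl
  have h := Za.le_of_index_le le_rfl hs
  nlinarith

lemma a_gt_order (hν : 0 ≤ ν) (Za : IsPosZeroSeq (deriv (besselJ ν)) a)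
    (hasq : ν*(ν+1) < (a 1)^2) : ∀ s, 1 ≤ s → ν < a s := by
  intro s hs
  have h := a_sq_gt hν Za hasq s hs
  have hp := Za.pos s hs
  nlinarith

-- C3: J'_{ν+1} does not vanish at zeros of J'_ν
lemma C3_proof (hν : 0 ≤ ν) (Za : IsPosZeroSeq (deriv (besselJ ν)) a)
    (hasq : ν*(ν+1) < (a 1)^2) :
    ∀ s, 1 ≤ s → deriv (besselJ (ν+1)) (a s) ≠ 0 := by
  intro s hs
  have hp := Za.pos s hs
  rw [SL1 hν hp (Za.isZero s hs)]
  apply mul_ne_zero (critical_value_ne_zero hν hp (Za.isZero s hs))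
  have hq := a_sq_gt hν Za hasq s hs
  have : ν*(ν+1)/(a s)^2 < 1 := (div_lt_one (by positivity)).2 hq
  linarith

-- C1: between consecutive zeros of J'_ν there is a zero of J'_{ν+1}
lemma C1_proof (hν : 0 ≤ ν) (Za : IsPosZeroSeq (deriv (besselJ ν)) a)
    (hasq : ν*(ν+1) < (a 1)^2) :
    ∀ s, 1 ≤ s → ∃ c, a s < c ∧ c < a (s+1) ∧ deriv (besselJ (ν+1)) c = 0 := by
  intro s hs
  have hp := Za.pos s hs
  have hmono := Za.mono s (s+1) hs (by omega)
  have halt := besselJ_alternate hν (a_gt_order hν Za hasq s hs) hmono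
    (Za.isZero s hs) (Za.isZero (s+1) (by omega))
    (fun y hy => Za.no_zero_between hs hy.1 hy.2)
  have hq1 := a_sq_gt hν Za hasq s hs
  have hq2 := a_sq_gt hν Za hasq (s+1) (by omega)
  have hp2 := Za.pos (s+1) (by omega)
  have hf1 : (0:ℝ) < 1 - ν*(ν+1)/(a s)^2 := by
    have : ν*(ν+1)/(a s)^2 < 1 := (div_lt_one (by positivity)).2 hq1
    linarith
  have hf2 : (0:ℝ) < 1 - ν*(ν+1)/(a (s+1))^2 := by
    have : ν*(ν+1)/(a (s+1))^2 < 1 := (div_lt_one (by positivity)).2 hq2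
    linarith
  have hprod : deriv (besselJ (ν+1)) (a s) * deriv (besselJ (ν+1)) (a (s+1)) < 0 := by
    rw [SL1 hν hp (Za.isZero s hs), SL1 hν hp2 (Za.isZero (s+1) (by omega))]
    nlinarith [mul_neg_of_neg_of_pos halt (mul_pos hf1 hf2)]
  have hcont : ContinuousOn (deriv (besselJ (ν+1))) (Icc (a s) (a (s+1))) :=
    (continuousOn_deriv_besselJ (by linarith : (0:ℝ) ≤ ν+1)).mono
      (fun y hy => lt_of_lt_of_le hp hy.1)
  obtain ⟨c, hc1, hc2⟩ := exists_zero_between hmono hcont hprod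
  exact ⟨c, hc1.1, hc1.2, hc2⟩

-- C2: between consecutive zeros of J'_{ν+1} there is a zero of J'_ν
lemma C2_proof (hν : 0 ≤ ν) (Zb : IsPosZeroSeq (deriv (besselJ (ν+1))) b) :
    ∀ s, 1 ≤ s → ∃ c, b s < c ∧ c < b (s+1) ∧ deriv (besselJ ν) c = 0 := by
  intro s hs
  have hp := Zb.pos s hs
  have hp2 := Zb.pos (s+1) (by omega)
  have hmono := Zb.mono s (s+1) hs (by omega)
  have halt := besselJ_alternate (show (0:ℝ) ≤ ν+1 by linarith)
    (b_gt hν Zb s hs) hmono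
    (Zb.isZero s hs) (Zb.isZero (s+1) (by omega))
    (fun y hy => Zb.no_zero_between hs hy.1 hy.2)
  have hq1 := b_sq_gt hν Zb s hs
  have hq2 := b_sq_gt hν Zb (s+1) (by omega)
  have hf1 : (0:ℝ) < 1 - ν*(ν+1)/(b s)^2 := by
    have : ν*(ν+1)/(b s)^2 < 1 := (div_lt_one (by positivity)).2 hq1
    linarith
  have hf2 : (0:ℝ) < 1 - ν*(ν+1)/(b (s+1))^2 := by
    have : ν*(ν+1)/(b (s+1))^2 < 1 := (div_lt_one (by positivity)).2 hq2
    linarith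
  have hprod : deriv (besselJ ν) (b s) * deriv (besselJ ν) (b (s+1)) < 0 := by
    rw [SL2 hν hp (Zb.isZero s hs), SL2 hν hp2 (Zb.isZero (s+1) (by omega))]
    nlinarith [mul_neg_of_neg_of_pos halt (mul_pos hf1 hf2)]
  have hcont : ContinuousOn (deriv (besselJ ν)) (Icc (b s) (b (s+1))) :=
    (continuousOn_deriv_besselJ hν).mono (fun y hy => lt_of_lt_of_le hp hy.1)
  obtain ⟨c, hc1, hc2⟩ := exists_zero_between hmono hcont hprod
  exact ⟨c, hc1.1, hc1.2, hc2⟩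

-- base case for ν > 0 : a 1 < b 1, and the square bound on a 1
lemma base_pos (hν : 0 < ν) (Za : IsPosZeroSeq (deriv (besselJ ν)) a)
    (Zb : IsPosZeroSeq (deriv (besselJ (ν+1))) b) :
    ν*(ν+1) < (a 1)^2 ∧ a 1 < b 1 := by
  have ha1 := Za.pos 1 le_rfl
  have hb1 := Zb.pos 1 le_rfl
  have hbgt : ν + 1 < b 1 := first_zero_gt_order (by linarith) Zb
  have hgpos := deriv_pos_before_first hν Za
  have hg1pos := deriv_pos_before_first (show (0:ℝ) < ν+1 by linarith) Zb
  have hJpos := besselJ_pos_below hν ha1 hgpos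
  have hJ1pos := besselJ_pos_below (show (0:ℝ) < ν+1 by linarith) hb1 hg1pos
  have hsq : ν*(ν+1) < (a 1)^2 := by
    by_contra hcon
    push_neg at hcon
    have ha1small : a 1 < ν + 1 := by nlinarith
    have ha1b1 : a 1 < b 1 := by linarith
    have hgb : 0 < deriv (besselJ (ν+1)) (a 1) := hg1pos (a 1) ⟨ha1, ha1b1⟩
    rw [SL1 hν.le ha1 (Za.isZero 1 le_rfl)] at hgb
    have hJa1 : 0 < besselJ ν (a 1) := hJpos (a 1) ⟨ha1, le_rfl⟩
    have hfac : 1 - ν*(ν+1)/(a 1)^2 ≤ 0 := by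
      have : (1:ℝ) ≤ ν*(ν+1)/(a 1)^2 := (one_le_div (by positivity)).2 hcon
      linarith
    nlinarith
  refine ⟨hsq, ?_⟩
  by_contra hcon
  push_neg at hcon  -- b 1 ≤ a 1
  have hJ1b1 : 0 < besselJ (ν+1) (b 1) := hJ1pos (b 1) ⟨hb1, le_rfl⟩
  have hfac : (0:ℝ) < 1 - ν*(ν+1)/(b 1)^2 := by
    have h := b_sq_gt hν.le Zb 1 le_rfl
    have : ν*(ν+1)/(b 1)^2 < 1 := (div_lt_one (by positivity)).2 h
    linarith
  have hgb1 : deriv (besselJ ν) (b 1) < 0 := by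
    rw [SL2 hν.le hb1 (Zb.isZero 1 le_rfl)]
    nlinarith
  rcases eq_or_lt_of_le hcon with heq | hlt
  · rw [heq, Za.isZero 1 le_rfl] at hgb1
    exact lt_irrefl 0 hgb1
  · have := hgpos (b 1) ⟨hb1, hlt⟩
    linarith

-- base case for ν = 0 : b 1 < a 1
lemma base_zero (Za : IsPosZeroSeq (deriv (besselJ 0)) a)
    (Zb : IsPosZeroSeq (deriv (besselJ (0+1))) b) :
    b 1 < a 1 := by
  have ha1 := Za.pos 1 le_rfl
  have hb1 := Zb.pos 1 le_rfl
  have hg1pos := deriv_pos_before_first (show (0:ℝ) < 0+1 by norm_num) Zb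
  have hgneg := deriv_neg_before_first Za
  by_contra hcon
  push_neg at hcon  -- a 1 ≤ b 1
  -- first: besselJ 0 (a 1) < 0
  have hJne := critical_value_ne_zero le_rfl ha1 (Za.isZero 1 le_rfl)
  have hJneg : besselJ 0 (a 1) < 0 := by
    rcases lt_or_gt_of_ne hJne with h | h
    · exact h
    · exfalso
      have hd := hasDerivAt_deriv_at_crit le_rfl ha1 (Za.isZero 1 le_rfl)
      have hdneg : ((0:ℝ)^2/(a 1)^2 - 1) * besselJ 0 (a 1) < 0 := by
        have he : ((0:ℝ)^2/(a 1)^2 - 1) = -1 := by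
          rw [zero_pow (by norm_num), zero_div]; ring
        rw [he]; linarith
      obtain ⟨δ, hδ, _, hleft⟩ := sign_right_of_deriv_neg hd (Za.isZero 1 le_rfl) hdneg
      set y := max (a 1 - δ/2) (a 1/2) with hy
      have hy1 : y < a 1 := max_lt (by linarith) (by linarith)
      have hy2 : a 1 - δ < y := lt_of_lt_of_le (by linarith) (le_max_left _ _)
      have hy3 : 0 < y := lt_of_lt_of_le (by linarith) (le_max_right _ _)
      have h1 := hleft y hy2 hy1
      have h2 := hgneg y ⟨hy3, hy1⟩
      linarith
  -- then : J'_1 (a 1) < 0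
  have hg1a1 : deriv (besselJ (0+1)) (a 1) < 0 := by
    rw [SL1 le_rfl ha1 (Za.isZero 1 le_rfl)]
    have : (0:ℝ)*(0+1)/(a 1)^2 = 0 := by rw [zero_mul, zero_div]
    rw [this]
    linarith
  rcases eq_or_lt_of_le hcon with heq | hlt
  · rw [heq] at hg1a1
    rw [Zb.isZero 1 le_rfl] at hg1a1
    exact lt_irrefl 0 hg1a1
  · have := hg1pos (a 1) ⟨ha1, hlt⟩
    linarith

end Core

/-- Interlacing of the zeros of `J'_ν` and `J'_{ν+1}`:
`j'_{ν,s} < j'_{ν+1,s} < j'_{ν,s+1}` for all `s ≥ 1`. -/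
theorem besselJDeriv_zeros_interlace (ν : ℝ) (hν : 0 ≤ ν)
    (j' j1' : ℕ → ℝ)
    (hj' : IsBesselJDerivZeroSeq ν j')
    (hj1' : IsBesselJDerivZeroSeq (ν + 1) j1') :
    ∀ s : ℕ, 1 ≤ s → j' s < j1' s ∧ j1' s < j' (s + 1) := by
  have Zb : IsPosZeroSeq (deriv (besselJ (ν+1))) j1' :=
    hj1'.2 (by intro h; linarith [hν, h] )
  rcases eq_or_lt_of_le hν with hν0 | hνpos
  · -- ν = 0
    subst hν0
    obtain ⟨hz1, Za⟩ := hj'.1 rfl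
    set a : ℕ → ℝ := fun s => j' (s+1) with ha
    have hbase := base_zero Za Zb
    have hasq : (0:ℝ)*(0+1) < (a 1)^2 := by
      have := Za.pos 1 le_rfl
      have h0 : (0:ℝ)*(0+1) = 0 := by norm_num
      rw [h0]
      positivity
    have hcomb := interlace_comb' Za Zb
      (C1_proof le_rfl Za hasq)
      (C2_proof le_rfl Zb)
      (C3_proof le_rfl Za hasq)
      hbase
    intro s hs
    rcases Nat.exists_eq_add_of_le hs with ⟨t, ht⟩
    rcases Nat.eq_zero_or_pos t with ht0 | htpos
    · -- s = 1
      rw [ht, ht0]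
      norm_num
      constructor
      · rw [hz1]; exact Zb.pos 1 le_rfl
      · exact hbase
    · -- s = 1 + t with t ≥ 1
      have := hcomb t htpos
      rw [ht]
      constructor
      · have h1 : j' (1+t) = a t := by rw [ha]; congr 1; omega
        have h2 : j1' (1+t) = j1' (t+1) := by congr 1; omega
        rw [h1, h2]
        exact this.1
      · have h2 : j1' (1+t) = j1' (t+1) := by congr 1; omega
        have h3 : j' (1+t+1) = a (t+1) := by rw [ha]; congr 1; omega
        rw [h2, h3]
        exact this.2
  · -- ν > 0
    have Za : IsPosZeroSeq (deriv (besselJ ν)) j' := hj'.2 (by linarith)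
    obtain ⟨hasq, hbase⟩ := base_pos hνpos Za Zb
    exact interlace_comb Za Zb
      (C1_proof hν Za hasq)
      (C2_proof hν Zb)
      (C3_proof hν Za hasq)
      hbase
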